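/- arXiv:2201.11734 — 6 statements merged into one kernel-verified Lean document; each statement's English description precedes it below -/
import Mathlib

section
/- The number of partitions of m into at most k parts, denoted P(m,k), satisfies (1/k!)·C(m+k-1, k-1) ≤ P(m,k) ≤ (1/k!)·C(m + C(k+1,2) - 1, k-1). -/
/-!
Permutations act on the `k`-tuples with sum `N`. Every tuple is a rearrangement of a partition,
so `k! · P(m,k)` is at least the number `C(m+k-1, k-1)` of tuples with sum `m`. Conversely,
adding the staircase `(k-1, …, 1, 0)` to a partition of `m` makes it strictly decreasing, with sum
`m + C(k,2)`; distinct permutations of a strictly decreasing tuple are distinct, so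
`k! · P(m,k)` is at most the number `C(m + C(k+1,2) - 1, k-1)` of tuples with that sum.
-/

open Finset

instance finite_subtype_sum_eq (ι : Type*) [Fintype ι] (N : ℕ) :
    Finite {f : ι → ℕ // ∑ i, f i = N} := by
  classical exact .of_equiv _ (Sym.equivNatSumOfFintype ι N)

theorem card_subtype_sum_eq (ι : Type*) [Fintype ι] (N : ℕ) :
    Nat.card {f : ι → ℕ // ∑ i, f i = N} = (N + Fintype.card ι - 1).choose N := by
  classical
  rw [← Nat.card_congr (Sym.equivNatSumOfFintype ι N), Nat.card_eq_fintype_card,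
    Sym.card_sym_eq_choose, add_comm]

theorem sum_fin_sub_one_sub (k : ℕ) : ∑ i : Fin k, (k - 1 - (i : ℕ)) = k.choose 2 := by
  rw [Fin.sum_univ_eq_sum_range (fun i => k - 1 - i), sum_range_reflect (fun i => i),
    sum_range_id, Nat.choose_two_right]

theorem Tuple.exists_antitone_comp_perm {α : Type*} [LinearOrder α] {n : ℕ} (f : Fin n → α) :
    ∃ σ : Equiv.Perm (Fin n), Antitone (f ∘ σ) :=
  ⟨Tuple.sort (OrderDual.toDual ∘ f), Tuple.monotone_sort (OrderDual.toDual ∘ f)⟩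

theorem Tuple.comp_perm_injective_of_strictAnti {α : Type*} [PartialOrder α] {n : ℕ} :
    Function.Injective fun p : Equiv.Perm (Fin n) × {μ : Fin n → α // StrictAnti μ} =>
      p.2.1 ∘ p.1 := by
  rintro ⟨σ, μ, hμ⟩ ⟨τ, ν, hν⟩ (h : μ ∘ σ = ν ∘ τ)
  have hμν : μ = ν := by
    have hσ : (μ ∘ σ) ∘ ⇑σ⁻¹ = μ := by ext; simp
    have hτ : (μ ∘ σ) ∘ ⇑τ⁻¹ = ν := by ext; simp [h]
    rw [← hσ, ← hτ]
    exact Tuple.unique_antitone (by rw [hσ]; exact hμ.antitone) (by rw [hτ]; exact hν.antitone)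
  subst hμν
  obtain rfl : σ = τ := Equiv.ext fun i => hμ.injective (congrFun h i)
  rfl

theorem strictAnti_sub_one_sub_val (k : ℕ) : StrictAnti fun i : Fin k => k - 1 - (i : ℕ) :=
  fun i j (hij : (i : ℕ) < j) => by
    show k - 1 - (j : ℕ) < k - 1 - (i : ℕ)
    omega

theorem factorial_mul_card_eq_card_perm_prod (k : ℕ) (α : Type*) :
    k.factorial * Nat.card α = Nat.card (Equiv.Perm (Fin k) × α) := by
  rw [Nat.card_prod, Nat.card_perm, Nat.card_fin]

instance finite_subtype_antitone_sum_eq (k N : ℕ) :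
    Finite {l : Fin k → ℕ // Antitone l ∧ ∑ i, l i = N} :=
  .of_injective (fun l => (⟨l.1, l.2.2⟩ : {f : Fin k → ℕ // ∑ i, f i = N}))
    fun _ _ h => Subtype.ext (congrArg Subtype.val h :)

theorem card_subtype_sum_eq_le_factorial_mul (k N : ℕ) :
    Nat.card {f : Fin k → ℕ // ∑ i, f i = N}
      ≤ k.factorial * Nat.card {l : Fin k → ℕ // Antitone l ∧ ∑ i, l i = N} := by
  rw [factorial_mul_card_eq_card_perm_prod]
  refine Nat.card_le_card_of_surjective
    (fun p => ⟨p.2.1 ∘ p.1, by rw [Function.comp_def, Equiv.sum_comp p.1 p.2.1, p.2.2.2]⟩)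
    fun ⟨f, hf⟩ => ?_
  obtain ⟨σ, hσ⟩ := Tuple.exists_antitone_comp_perm f
  refine ⟨(σ⁻¹, ⟨f ∘ σ, hσ, by rw [Function.comp_def, Equiv.sum_comp σ f, hf]⟩), ?_⟩
  ext
  simp

theorem factorial_mul_card_le_card_subtype_sum_eq (k N : ℕ) :
    k.factorial * Nat.card {l : Fin k → ℕ // Antitone l ∧ ∑ i, l i = N}
      ≤ Nat.card {f : Fin k → ℕ // ∑ i, f i = N + k.choose 2} := by
  set δ : Fin k → ℕ := fun i => k - 1 - (i : ℕ)
  rw [factorial_mul_card_eq_card_perm_prod]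
  refine Nat.card_le_card_of_injective
    (fun p => ⟨(p.2.1 + δ) ∘ p.1, by
      rw [Function.comp_def, Equiv.sum_comp p.1 (p.2.1 + δ)]
      simp only [Pi.add_apply, Finset.sum_add_distrib]
      rw [p.2.2.2, sum_fin_sub_one_sub]⟩)
    fun ⟨σ, l, hl⟩ ⟨τ, l', hl'⟩ h => ?_
  have := Tuple.comp_perm_injective_of_strictAnti
    (a₁ := (σ, ⟨l + δ, hl.1.add_strictAnti (strictAnti_sub_one_sub_val k)⟩))
    (a₂ := (τ, ⟨l' + δ, hl'.1.add_strictAnti (strictAnti_sub_one_sub_val k)⟩))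
    (congrArg Subtype.val h)
  simp only [Prod.mk.injEq, Subtype.mk.injEq, add_left_inj] at this
  obtain ⟨rfl, rfl⟩ := this
  rfl

theorem stmt_3_general (m k : ℕ) (hk : 0 < k) :
    (m + k - 1).choose (k - 1)
        ≤ k.factorial * Nat.card {l : Fin k → ℕ // Antitone l ∧ ∑ i, l i = m} ∧
    k.factorial * Nat.card {l : Fin k → ℕ // Antitone l ∧ ∑ i, l i = m}
        ≤ (m + (k + 1).choose 2 - 1).choose (k - 1) := by
  have hchoose : (k + 1).choose 2 = k.choose 2 + k := by
    rw [Nat.choose_succ_succ', Nat.choose_one_right, add_comm]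
  constructor
  · calc (m + k - 1).choose (k - 1)
        = (m + k - 1).choose m := Nat.choose_symm_of_eq_add (by omega)
      _ = Nat.card {f : Fin k → ℕ // ∑ i, f i = m} := by
        rw [card_subtype_sum_eq, Fintype.card_fin]
      _ ≤ _ := card_subtype_sum_eq_le_factorial_mul k m
  · calc _ ≤ Nat.card {f : Fin k → ℕ // ∑ i, f i = m + k.choose 2} :=
          factorial_mul_card_le_card_subtype_sum_eq k m
      _ = (m + k.choose 2 + k - 1).choose (m + k.choose 2) := by
        rw [card_subtype_sum_eq, Fintype.card_fin]
      _ = (m + (k + 1).choose 2 - 1).choose (k - 1) := by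
        rw [hchoose, ← add_assoc]
        exact Nat.choose_symm_of_eq_add (by omega)

/-- the number `P(m,k)` of partitions of `m` into at most `k` parts satisfies
`(1/k!)·C(m+k-1, k-1) ≤ P(m,k) ≤ (1/k!)·C(m + C(k+1,2) - 1, k-1)` (stated multiplied
through by `k!`). -/
theorem stmt_3 (m k : ℕ) (hm : 0 < m) (hk : 0 < k) :
    (m + k - 1).choose (k - 1)
        ≤ k.factorial * Nat.card {l : Fin k → ℕ // Antitone l ∧ ∑ i, l i = m} ∧
    k.factorial * Nat.card {l : Fin k → ℕ // Antitone l ∧ ∑ i, l i = m}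
        ≤ (m + (k + 1).choose 2 - 1).choose (k - 1) :=
  stmt_3_general m k hk
end

section
/- The (n+1)×(n+1) matrix M with entries M_{ij} = 1/(k+i+j-2)! (for 1 ≤ i,j ≤ n+1) has determinant (-1)^{n(n+1)/2} · ∏_{i=0}^{n} i!/(k+n+i)!, and in particular M is invertible. -/
/-!
Reversing the columns turns the entry `1 / (k + i + n - j)!` into `(k + n + i)!⁻¹` times the
falling factorial of `k + n + i` of length `j`, the value at `k + n + i` of the monic polynomial
`descPochhammer j` of degree `j`. Hence the determinant is the sign `(-1) ^ (n + 1).choose 2` of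
the reversal, times `∏ (k + n + i)!⁻¹`, times the Vandermonde determinant of the consecutive
points `k + n, …, k + 2n`, which is the superfactorial `∏ i!`.
-/

open Equiv Finset Polynomial Nat Matrix

theorem Fin.revPerm_succ_eq_decomposeFin_mul_finRotate (n : ℕ) :
    (Fin.revPerm : Perm (Fin (n + 1))) =
      Perm.decomposeFin.symm (0, Fin.revPerm) * finRotate (n + 1) := by
  refine Equiv.ext fun i => Fin.lastCases ?_ (fun i => ?_) i
  · simp
  · ext; simp; omega

theorem Fin.sign_revPerm (n : ℕ) :
    Perm.sign (Fin.revPerm : Perm (Fin n)) = (-1) ^ n.choose 2 := by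
  induction n with
  | zero => rfl
  | succ n ih =>
    rw [Fin.revPerm_succ_eq_decomposeFin_mul_finRotate, Perm.sign_mul,
      Perm.decomposeFin.symm_sign, ih, sign_finRotate, Nat.choose_succ_succ', Nat.choose_one_right,
      if_pos rfl, one_mul, pow_add, add_tsub_cancel_right, mul_comm]

theorem Matrix.det_eval_descPochhammer {R : Type*} [CommRing R] [Nontrivial R] [NoZeroDivisors R]
    {n : ℕ} (v : Fin n → R) :
    (of fun i j : Fin n => (descPochhammer R j).eval (v i)).det = (vandermonde v).det :=
  (det_eval_matrixOfPolynomials_eq_det_vandermonde v _ (fun j => descPochhammer_natDegree R j)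
    fun j => monic_descPochhammer R j).symm

theorem Nat.inv_factorial_sub_eq_descFactorial_div {K : Type*} [Field K] [CharZero K] {m j : ℕ}
    (h : j ≤ m) :
    (((m - j)! : ℕ) : K)⁻¹ = m.descFactorial j / m ! := by
  rw [← Nat.factorial_mul_descFactorial h, Nat.cast_mul, mul_comm, ← div_div,
    div_self (Nat.cast_ne_zero.mpr (Nat.descFactorial_pos.mpr h).ne'), one_div]

theorem inv_factorial_add_add_rev {K : Type*} [Field K] [CharZero K] (k n : ℕ)
    (i j : Fin (n + 1)) :
    ((k + i + j.rev)! : K)⁻¹ =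
      ((k + n + i)! : K)⁻¹ * (descPochhammer K j).eval ((k + n + i : ℕ) : K) := by
  have hj : (j : ℕ) ≤ k + n + i := by omega
  rw [descPochhammer_eval_eq_descFactorial, ← div_eq_inv_mul,
    ← Nat.inv_factorial_sub_eq_descFactorial_div hj, Fin.val_rev]
  congr 3
  omega

theorem Matrix.det_inv_factorial_add_add {K : Type*} [Field K] [CharZero K] (k n : ℕ) :
    (of fun i j : Fin (n + 1) => ((k + i + j)! : K)⁻¹).det =
      (-1) ^ (n + 1).choose 2 * ∏ i : Fin (n + 1), (i ! : K) / (k + n + i)! := by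
  have hrev : (of fun i j : Fin (n + 1) => ((k + i + j)! : K)⁻¹) =
      (of fun i j : Fin (n + 1) => ((k + n + i)! : K)⁻¹ *
        (descPochhammer K j).eval ((k + n + i : ℕ) : K)).submatrix id Fin.revPerm := by
    ext i j
    rw [submatrix_apply, of_apply, of_apply, ← inv_factorial_add_add_rev, id, Fin.revPerm_apply,
      Fin.rev_rev]
  have hscale := det_mul_column (fun i : Fin (n + 1) => ((k + n + i)! : K)⁻¹)
    (of fun i j : Fin (n + 1) => (descPochhammer K j).eval ((k + n + i : ℕ) : K))
  simp only [of_apply] at hscale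
  have hpoch : (of fun i j : Fin (n + 1) =>
      (descPochhammer K j).eval ((k + n + i : ℕ) : K)).det = sf n := by
    simp only [det_eval_descPochhammer, Nat.cast_add, add_comm _ ((_ : Fin _) : K), ← add_assoc,
      det_vandermonde_add, det_vandermonde_id_eq_superFactorial]
  rw [hrev, det_permute', hscale, hpoch, Fin.sign_revPerm, ← prod_range_succ_factorial,
    ← Fin.prod_univ_eq_prod_range]
  push_cast
  rw [← prod_mul_distrib]
  simp only [div_eq_inv_mul]

/-- the `(n+1)×(n+1)` matrix with entries `1/(k+i+j-2)!` (indices `1 ≤ i,j ≤ n+1`;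
here `i,j : Fin (n+1)` are the 0-based shifts) has determinant
`(-1)^(n(n+1)/2) · ∏_{i=0}^n i!/(k+n+i)!`, and in particular is invertible. -/
theorem stmt_6 (k n : ℕ) :
    (Matrix.det (fun i j : Fin (n + 1) =>
        (1 : ℚ) / ((k + (i : ℕ) + (j : ℕ)).factorial : ℚ))
      = (-1) ^ (n * (n + 1) / 2) *
          ∏ i : Fin (n + 1), ((i : ℕ).factorial : ℚ) / ((k + n + (i : ℕ)).factorial : ℚ)) ∧
    IsUnit (Matrix.det (fun i j : Fin (n + 1) =>
        (1 : ℚ) / ((k + (i : ℕ) + (j : ℕ)).factorial : ℚ))) := by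
  have hdet : Matrix.det (fun i j : Fin (n + 1) => (1 : ℚ) / ((k + i + j)! : ℚ)) =
      (-1) ^ (n * (n + 1) / 2) * ∏ i : Fin (n + 1), (i ! : ℚ) / ((k + n + i)! : ℚ) := by
    have hexp : (n + 1).choose 2 = n * (n + 1) / 2 := by
      rw [Nat.choose_two_right, add_tsub_cancel_right, Nat.mul_comm]
    simp only [one_div, ← hexp]
    exact det_inv_factorial_add_add k n
  refine ⟨hdet, ?_⟩
  rw [hdet, isUnit_iff_ne_zero]
  exact mul_ne_zero (pow_ne_zero _ (by norm_num)) (prod_ne_zero_iff.mpr fun i _ => by positivity)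
end

section
/- The n×n Cauchy-type matrix with entries 1/(k+i+j-1) for 1 ≤ i,j ≤ n has determinant ∏_{i=0}^{n-1} (i!)^2 (k+i)! / (k+n+i)!, and in particular is invertible. -/
/-!
Cauchy's determinant formula `det (1 / (x i + y j)) = V(x) V(y) / ∏ i, ∏ j, (x i + y j)` is proved
by induction: subtracting multiples of the first row clears the first column, and the remaining
block is again a Cauchy matrix, of the nodes with index `≥ 1`, scaled along rows and columns.
The matrix of the theorem is the Cauchy matrix of `x i = i + k`, `y j = j + 1`; both Vandermonde
determinants are then `∏ i, i !`, and row `i` of `∏ i, ∏ j, (x i + y j)` is `(k + n + i)! / (k + i)!`.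
-/

open Finset Nat

namespace Matrix

variable {R K : Type*} [CommRing R] [Field K]

theorem det_eq_mul_det_submatrix_succ_of_col_zero {n : ℕ}
    (A : Matrix (Fin (n + 1)) (Fin (n + 1)) R) (hA : ∀ i : Fin n, A i.succ 0 = 0) :
    A.det = A 0 0 * (A.submatrix Fin.succ Fin.succ).det := by
  simp [det_succ_column_zero A, Fin.sum_univ_succ, hA]

def cauchy {m n : Type*} (x : m → K) (y : n → K) : Matrix m n K :=
  of fun i j => (x i + y j)⁻¹

@[simp]
theorem cauchy_apply {m n : Type*} (x : m → K) (y : n → K) (i : m) (j : n) :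
    cauchy x y i j = (x i + y j)⁻¹ := rfl

theorem det_cauchy {n : ℕ} (x y : Fin n → K) (hxy : ∀ i j, x i + y j ≠ 0) :
    (cauchy x y).det = (vandermonde x).det * (vandermonde y).det / ∏ i, ∏ j, (x i + y j) := by
  induction n with
  | zero => simp
  | succ n ih =>
    set c : Fin (n + 1) → K := Fin.cons 0 fun i => (x 0 + y 0) / (x i.succ + y 0)
    set B : Matrix (Fin (n + 1)) (Fin (n + 1)) K :=
      of fun i j => (x i + y j)⁻¹ - c i * (x 0 + y j)⁻¹
    have hB : (cauchy x y).det = B.det :=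
      det_eq_of_forall_row_eq_smul_add_const c 0 rfl fun i j => by simp [B, c]
    have hB_col_zero : ∀ i : Fin n, B i.succ 0 = 0 := by
      intro i
      have := hxy i.succ 0
      have := hxy 0 0
      simp only [of_apply, Fin.cons_succ, B, c]
      field_simp
      ring
    -- `1/(x+y') - (x₀+y₀)/((x+y₀)(x₀+y')) = (x-x₀)(y'-y₀)/((x+y₀)(x₀+y')(x+y'))`
    have hB_submatrix : (B.submatrix Fin.succ Fin.succ).det =
        (∏ i : Fin n, (x i.succ - x 0) / (x i.succ + y 0)) *
          ((∏ j : Fin n, (y j.succ - y 0) / (x 0 + y j.succ)) *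
            (cauchy (x ∘ Fin.succ) (y ∘ Fin.succ)).det) := by
      rw [← det_mul_row, ← det_mul_column]
      congr 1
      ext i j
      have := hxy i.succ 0
      have := hxy 0 j.succ
      have := hxy i.succ j.succ
      simp only [submatrix_apply, of_apply, Fin.cons_succ, cauchy_apply, Function.comp_apply, B, c]
      field_simp
      ring
    rw [hB, det_eq_mul_det_submatrix_succ_of_col_zero B hB_col_zero, hB_submatrix,
      ih (x ∘ Fin.succ) (y ∘ Fin.succ) fun i j => hxy _ _]
    simp only [det_vandermonde, B, c]
    simp only [Fin.prod_univ_succ, Fin.Ioi_zero_eq_map, Finset.prod_map, Fin.coe_succEmb,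
      Fin.prod_Ioi_succ]
    have := hxy 0 0
    have : ∏ j : Fin n, (x 0 + y j.succ) ≠ 0 := prod_ne_zero_iff.2 fun _ _ => hxy _ _
    have : ∏ i : Fin n, (x i.succ + y 0) ≠ 0 := prod_ne_zero_iff.2 fun _ _ => hxy _ _
    have : ∏ i : Fin n, ∏ j : Fin n, (x i.succ + y j.succ) ≠ 0 :=
      prod_ne_zero_iff.2 fun _ _ => prod_ne_zero_iff.2 fun _ _ => hxy _ _
    simp only [of_apply, Fin.cons_zero, zero_mul, sub_zero, Function.comp_apply,
      Finset.prod_div_distrib, Finset.prod_mul_distrib]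
    field_simp

theorem det_vandermonde_natCast (n : ℕ) :
    (vandermonde fun i : Fin n => (i : R)).det = ∏ i : Fin n, ((i : ℕ)! : R) := by
  cases n with
  | zero => simp
  | succ n =>
    rw [det_vandermonde_id_eq_superFactorial, ← Nat.prod_range_succ_factorial,
      Fin.prod_univ_eq_prod_range (fun i => (i ! : R)), Nat.cast_prod]

end Matrix

theorem Nat.prod_cast_add_add_one_eq_factorial_div {K : Type*} [Field K] [CharZero K] (a m : ℕ) :
    ∏ j : Fin m, ((a : K) + j + 1) = (a + m)! / a ! := by
  rw [eq_div_iff (Nat.cast_ne_zero.2 a.factorial_ne_zero), ← Nat.factorial_mul_ascFactorial,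
    Nat.ascFactorial_eq_prod_range, ← Fin.prod_univ_eq_prod_range]
  push_cast
  rw [mul_comm]
  congr 1
  exact prod_congr rfl fun j _ => by ring

open Matrix in
theorem stmt_7_general (k n : ℕ) :
    (Matrix.det (fun i j : Fin n =>
        (1 : ℚ) / ((k : ℚ) + (i : ℕ) + (j : ℕ) + 1))
      = ∏ i : Fin n, ((i : ℕ).factorial : ℚ) ^ 2 * ((k + (i : ℕ)).factorial : ℚ) /
          ((k + n + (i : ℕ)).factorial : ℚ)) ∧
    IsUnit (Matrix.det (fun i j : Fin n =>
        (1 : ℚ) / ((k : ℚ) + (i : ℕ) + (j : ℕ) + 1))) := by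
  have hM : (fun i j : Fin n => (1 : ℚ) / ((k : ℚ) + (i : ℕ) + (j : ℕ) + 1)) =
      cauchy (fun i : Fin n => ((i : ℕ) : ℚ) + k) (fun j : Fin n => ((j : ℕ) : ℚ) + 1) := by
    ext i j
    simp only [cauchy_apply, one_div]
    ring_nf
  have hrow (i : Fin n) : ∏ j : Fin n, (((i : ℕ) : ℚ) + k + (((j : ℕ) : ℚ) + 1)) =
      (k + n + i)! / (k + i)! := by
    rw [← Nat.add_right_comm, ← Nat.prod_cast_add_add_one_eq_factorial_div]
    exact prod_congr rfl fun j _ => by push_cast; ring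
  have hdet : Matrix.det (fun i j : Fin n => (1 : ℚ) / ((k : ℚ) + (i : ℕ) + (j : ℕ) + 1))
      = ∏ i : Fin n, ((i : ℕ).factorial : ℚ) ^ 2 * ((k + (i : ℕ)).factorial : ℚ) /
          ((k + n + (i : ℕ)).factorial : ℚ) := by
    rw [hM, det_cauchy _ _ fun i j => by positivity, det_vandermonde_add, det_vandermonde_add,
      det_vandermonde_natCast, ← prod_mul_distrib, ← prod_div_distrib]
    refine prod_congr rfl fun i _ => ?_
    rw [hrow, div_div_eq_mul_div, sq]
  exact ⟨hdet, isUnit_iff_ne_zero.2 (by rw [hdet]; positivity)⟩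

/-- the `n×n` Cauchy-type matrix with entries `1/(k+i+j-1)` (indices
`1 ≤ i,j ≤ n`; here `i,j : Fin n` are the 0-based shifts so the entry is `1/(k+i+j+1)`)
has determinant `∏_{i=0}^{n-1} (i!)²(k+i)!/(k+n+i)!`, and in particular is invertible. -/
theorem stmt_7 (k n : ℕ) (hn : 1 ≤ n) :
    (Matrix.det (fun i j : Fin n =>
        (1 : ℚ) / ((k : ℚ) + (i : ℕ) + (j : ℕ) + 1))
      = ∏ i : Fin n, ((i : ℕ).factorial : ℚ) ^ 2 * ((k + (i : ℕ)).factorial : ℚ) /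
          ((k + n + (i : ℕ)).factorial : ℚ)) ∧
    IsUnit (Matrix.det (fun i j : Fin n =>
        (1 : ℚ) / ((k : ℚ) + (i : ℕ) + (j : ℕ) + 1))) :=
  stmt_7_general k n
end

section
/- Let D be a nonzero linear differential operator on ℂ[x_1,...,x_k] with polynomial coefficients. Then the dimension of the space of polynomial solutions of Df = 0 of degree at most m is O(m^{k-1}) as m → ∞. -/
open Filter Asymptotics

/-- The operator `∂^α = ∏ᵢ ∂ᵢ^(αᵢ)` on `ℂ[x₁,...,x_k]`. -/
noncomputable def pderivPow (k : ℕ) (α : Fin k →₀ ℕ) :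
    Module.End ℂ (MvPolynomial (Fin k) ℂ) :=
  (List.ofFn fun i : Fin k =>
    ((MvPolynomial.pderiv i).toLinearMap : Module.End ℂ (MvPolynomial (Fin k) ℂ)) ^ (α i)).prod

/-- The linear differential operator with polynomial coefficients
`D = Σ_{(α,β) ∈ S} c_{αβ} x^β ∂^α` on `ℂ[x₁,...,x_k]`. -/
noncomputable def diffOp (k : ℕ) (S : Finset ((Fin k →₀ ℕ) × (Fin k →₀ ℕ)))
    (c : ((Fin k →₀ ℕ) × (Fin k →₀ ℕ)) → ℂ) :
    Module.End ℂ (MvPolynomial (Fin k) ℂ) :=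
  ∑ p ∈ S, c p •
    ((LinearMap.mulLeft ℂ (MvPolynomial.monomial p.2 (1 : ℂ))) ∘ₗ pderivPow k p.1)

/-!
The term `x^β ∂^α` sends `x^γ` to `γ^{(α)} x^(γ + β - α)`, where `γ^{(α)} = ∏ᵢ γᵢ(γᵢ-1)⋯(γᵢ-αᵢ+1)`.
Order `ℤᵏ` lexicographically, let `w` be the largest shift `β - α` occurring in `D`, and let
`Q(γ) = Σ_{β - α = w} c_{αβ} γ^{(α)}`; evaluating at a minimal `α` shows `Q ≠ 0`. If `Df = 0`
and `x^γ` is the lexicographically leading monomial of `f`, then the coefficient of `x^(γ + w)`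
in `Df` is `f_γ Q(γ)`, so `Q(γ) = 0`. Hence a nonzero solution of degree `≤ m` has a nonzero
coefficient at some zero of `Q` in `{0, …, m}ᵏ`, so the solution space embeds into functions on
that zero set, which has at most `deg Q · (m + 1)^(k - 1)` points by Schwartz–Zippel.
-/

open MvPolynomial

variable {k : ℕ} (S : Finset ((Fin k →₀ ℕ) × (Fin k →₀ ℕ)))
  (c : ((Fin k →₀ ℕ) × (Fin k →₀ ℕ)) → ℂ)

noncomputable def multiDescFactorial (γ α : Fin k →₀ ℕ) : ℂ :=
  ∏ i, ((γ i).descFactorial (α i) : ℂ)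

lemma multiDescFactorial_ne_zero_iff {γ α : Fin k →₀ ℕ} :
    multiDescFactorial γ α ≠ 0 ↔ α ≤ γ := by
  simp [multiDescFactorial, Finset.prod_ne_zero_iff, Nat.descFactorial_eq_zero_iff_lt,
    Finsupp.le_def]

noncomputable def fallingPoly (α : Fin k →₀ ℕ) : MvPolynomial (Fin k) ℂ :=
  ∏ i, Polynomial.aeval (X i) (descPochhammer ℂ (α i))

lemma eval_fallingPoly (α γ : Fin k →₀ ℕ) :
    eval (fun i => (γ i : ℂ)) (fallingPoly α) = multiDescFactorial γ α := by
  rw [fallingPoly, multiDescFactorial, map_prod]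
  refine Finset.prod_congr rfl fun i _ => ?_
  calc eval (fun i => (γ i : ℂ)) (Polynomial.aeval (X i) (descPochhammer ℂ (α i)))
      = aeval (fun i => (γ i : ℂ)) (Polynomial.aeval (X i) (descPochhammer ℂ (α i))) := rfl
    _ = (descPochhammer ℂ (α i)).eval (γ i : ℂ) := by
      rw [← Polynomial.aeval_algHom_apply, aeval_X, Polynomial.coe_aeval_eq_eval]
    _ = (γ i).descFactorial (α i) := descPochhammer_eval_eq_descFactorial ℂ _ _

lemma pderiv_pow_monomial (i : Fin k) (n : ℕ) (γ : Fin k →₀ ℕ) (a : ℂ) :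
    ((pderiv i).toLinearMap ^ n : Module.End ℂ (MvPolynomial (Fin k) ℂ)) (monomial γ a)
      = monomial (γ - Finsupp.single i n) (a * (γ i).descFactorial n) := by
  induction n with
  | zero => simp
  | succ n ih =>
    rw [pow_succ', Module.End.mul_apply, ih, Derivation.coeFn_coe, pderiv_monomial,
      tsub_tsub, ← Finsupp.single_add, Finsupp.tsub_apply, Finsupp.single_eq_same,
      Nat.descFactorial_succ, Nat.cast_mul]
    ring_nf

lemma list_prod_pderiv_pow_monomial (α : Fin k →₀ ℕ) {L : List (Fin k)} (hL : L.Nodup)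
    (γ : Fin k →₀ ℕ) (a : ℂ) :
    (L.map fun i => ((pderiv i).toLinearMap ^ α i : Module.End ℂ (MvPolynomial (Fin k) ℂ))).prod
        (monomial γ a)
      = monomial (γ - (L.map fun i => Finsupp.single i (α i)).sum)
          (a * (L.map fun i => ((γ i).descFactorial (α i) : ℂ)).prod) := by
  induction L with
  | nil => simp
  | cons i L ih =>
    obtain ⟨hi, hL⟩ := List.nodup_cons.mp hL
    have hγi : (γ - (L.map fun j => Finsupp.single j (α j)).sum) i = γ i := by
      classical
      rw [Finsupp.tsub_apply, ← List.sum_toFinset _ hL, Finsupp.finsetSum_apply,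
        Finset.sum_eq_zero fun j hj => Finsupp.single_eq_of_ne ?_, Nat.sub_zero]
      rintro rfl
      exact hi (List.mem_toFinset.mp hj)
    simp only [List.map_cons, List.prod_cons, List.sum_cons, Module.End.mul_apply]
    rw [ih hL, pderiv_pow_monomial, hγi, tsub_tsub, add_comm]
    ring_nf

lemma pderivPow_monomial (α γ : Fin k →₀ ℕ) (a : ℂ) :
    pderivPow k α (monomial γ a) = monomial (γ - α) (a * multiDescFactorial γ α) := by
  rw [pderivPow, List.ofFn_eq_map, list_prod_pderiv_pow_monomial α (List.nodup_finRange k),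
    ← Fin.sum_univ_def, ← Fin.prod_univ_def, Finsupp.univ_sum_single, multiDescFactorial]

lemma diffOp_monomial (γ : Fin k →₀ ℕ) (a : ℂ) :
    diffOp k S c (monomial γ a)
      = ∑ p ∈ S, monomial (p.2 + (γ - p.1)) (c p * a * multiDescFactorial γ p.1) := by
  simp only [diffOp, LinearMap.sum_apply, LinearMap.smul_apply,
    LinearMap.comp_apply, pderivPow_monomial, LinearMap.mulLeft_apply, monomial_mul, one_mul,
    smul_monomial, smul_eq_mul, mul_assoc]

lemma coeff_diffOp (f : MvPolynomial (Fin k) ℂ) (ν : Fin k →₀ ℕ) :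
    coeff ν (diffOp k S c f) = ∑ p ∈ S, ∑ γ ∈ f.support,
      if p.2 + (γ - p.1) = ν then c p * coeff γ f * multiDescFactorial γ p.1 else 0 := by
  conv_lhs => rw [f.as_sum]
  simp only [map_sum, diffOp_monomial S c, coeff_sum, coeff_monomial]
  exact Finset.sum_comm

def lexExp (γ : Fin k →₀ ℕ) : Lex (Fin k → ℤ) := toLex fun i => (γ i : ℤ)

/-- `x^β ∂^α` sends `x^γ` to a multiple of `x^(γ + β - α)`; here `p = (α, β)`. -/
def shift (p : (Fin k →₀ ℕ) × (Fin k →₀ ℕ)) : Lex (Fin k → ℤ) :=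
  toLex fun i => (p.2 i : ℤ) - p.1 i

lemma lexExp_injective : Function.Injective (lexExp (k := k)) := fun γ δ h => by
  ext i
  exact_mod_cast congr_fun (toLex.injective h) i

lemma add_tsub_eq_add_tsub_iff {p q : (Fin k →₀ ℕ) × (Fin k →₀ ℕ)} {γ δ : Fin k →₀ ℕ}
    (hp : p.1 ≤ γ) (hq : q.1 ≤ δ) :
    p.2 + (γ - p.1) = q.2 + (δ - q.1) ↔ lexExp γ + shift p = lexExp δ + shift q := by
  rw [Finsupp.ext_iff, lexExp, lexExp, shift, shift, ← toLex_add, ← toLex_add, toLex_inj,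
    funext_iff]
  refine forall_congr' fun i => ?_
  have := hp i
  have := hq i
  simp only [Finsupp.add_apply, Finsupp.tsub_apply, Pi.add_apply]
  omega

lemma add_tsub_eq_add_tsub_iff_of_le {p q : (Fin k →₀ ℕ) × (Fin k →₀ ℕ)} {γ δ : Fin k →₀ ℕ}
    (hp : p.1 ≤ δ) (hq : q.1 ≤ γ) (hδγ : lexExp δ ≤ lexExp γ) (hpq : shift p ≤ shift q) :
    p.2 + (δ - p.1) = q.2 + (γ - q.1) ↔ δ = γ ∧ shift p = shift q := by
  rw [add_tsub_eq_add_tsub_iff hp hq, add_eq_add_iff_eq_and_eq hδγ hpq, lexExp_injective.eq_iff]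

lemma eq_of_shift_eq {p q : (Fin k →₀ ℕ) × (Fin k →₀ ℕ)} (h : shift p = shift q)
    (h₁ : p.1 = q.1) : p = q := by
  refine Prod.ext h₁ (Finsupp.ext fun i => ?_)
  have := congr_fun (toLex.injective h) i
  have := congr_arg (· i) h₁
  omega

/-- The indicial polynomial of the terms of `D` with shift `w`: its value at `γ ∈ ℕᵏ` is the
coefficient of `x^(γ + w)` that these terms produce from `x^γ`. -/
noncomputable def indicialPoly (w : Lex (Fin k → ℤ)) : MvPolynomial (Fin k) ℂ :=
  ∑ p ∈ S with shift p = w, C (c p) * fallingPoly p.1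

lemma eval_indicialPoly (w : Lex (Fin k → ℤ)) (γ : Fin k →₀ ℕ) :
    eval (fun i => (γ i : ℂ)) (indicialPoly S c w)
      = ∑ p ∈ S with shift p = w, c p * multiDescFactorial γ p.1 := by
  simp only [indicialPoly, map_sum, map_mul, eval_C, eval_fallingPoly]

variable {S c}

lemma indicialPoly_ne_zero {w : Lex (Fin k → ℤ)} (h : ∃ p ∈ S, shift p = w ∧ c p ≠ 0) :
    indicialPoly S c w ≠ 0 := by
  obtain ⟨q, ⟨hqS, hqw, hqc⟩, hqmin⟩ :=
    exists_minimalFor_of_wellFoundedLT (fun p => p ∈ S ∧ shift p = w ∧ c p ≠ 0) Prod.fst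
      (by simpa only [exists_prop] using h)
  -- At `γ = q.1` every other term vanishes, by minimality of `q.1`.
  have hval : eval (fun i => (q.1 i : ℂ)) (indicialPoly S c w)
      = c q * multiDescFactorial q.1 q.1 := by
    rw [eval_indicialPoly]
    refine Finset.sum_eq_single_of_mem q (Finset.mem_filter.mpr ⟨hqS, hqw⟩) fun p hp hpq => ?_
    obtain ⟨hpS, hpw⟩ := Finset.mem_filter.mp hp
    by_contra hne
    obtain ⟨hpc, hpd⟩ := mul_ne_zero_iff.mp hne
    have hle := multiDescFactorial_ne_zero_iff.mp hpd
    exact hpq (eq_of_shift_eq (hpw.trans hqw.symm)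
      (le_antisymm hle (hqmin ⟨hpS, hpw, hpc⟩ hle)))
  intro h0
  rw [h0, map_zero] at hval
  exact mul_ne_zero hqc (multiDescFactorial_ne_zero_iff.mpr le_rfl) hval.symm

lemma eval_indicialPoly_eq_zero_of_mem_ker {w : Lex (Fin k → ℤ)}
    (hw : ∀ p ∈ S, c p ≠ 0 → shift p ≤ w) {f : MvPolynomial (Fin k) ℂ}
    (hf : diffOp k S c f = 0) {γ : Fin k →₀ ℕ} (hγ : γ ∈ f.support)
    (hγmax : ∀ δ ∈ f.support, lexExp δ ≤ lexExp γ) :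
    eval (fun i => (γ i : ℂ)) (indicialPoly S c w) = 0 := by
  rw [eval_indicialPoly]
  by_cases h : ∃ q ∈ S, shift q = w ∧ q.1 ≤ γ
  swap
  · push Not at h
    refine Finset.sum_eq_zero fun p hp => ?_
    obtain ⟨hpS, hpw⟩ := Finset.mem_filter.mp hp
    rw [not_ne_iff.mp (mt multiDescFactorial_ne_zero_iff.mp (h p hpS hpw)), mul_zero]
  obtain ⟨q, hqS, rfl, hqγ⟩ := h
  -- Only the pair (`x^γ`, terms of shift `w`) reaches the lexicographically top exponent.
  have hterm : ∀ p ∈ S, ∀ δ ∈ f.support,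
      (if p.2 + (δ - p.1) = q.2 + (γ - q.1) then c p * coeff δ f * multiDescFactorial δ p.1
        else 0)
      = if δ = γ ∧ shift p = shift q then c p * coeff γ f * multiDescFactorial γ p.1 else 0 := by
    intro p hp δ hδ
    by_cases hzero : c p * multiDescFactorial δ p.1 = 0
    · have h0 : c p * coeff δ f * multiDescFactorial δ p.1 = 0 := by
        rw [mul_right_comm, hzero, zero_mul]
      rw [ite_eq_right_iff.mpr fun _ => h0, ite_eq_right_iff.mpr fun h => by rw [← h.1]; exact h0]
    obtain ⟨hpc, hpd⟩ := mul_ne_zero_iff.mp hzero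
    have hiff := add_tsub_eq_add_tsub_iff_of_le (multiDescFactorial_ne_zero_iff.mp hpd) hqγ
      (hγmax δ hδ) (hw p hp hpc)
    by_cases h : δ = γ ∧ shift p = shift q
    · rw [if_pos (hiff.mpr h), if_pos h, h.1]
    · rw [if_neg (mt hiff.mp h), if_neg h]
  have hcoeff := coeff_diffOp S c f (q.2 + (γ - q.1))
  rw [hf, coeff_zero, Finset.sum_congr rfl fun p hp => Finset.sum_congr rfl (hterm p hp)] at hcoeff
  simp only [ite_and, Finset.sum_ite_eq', if_pos hγ] at hcoeff
  rw [← Finset.sum_filter] at hcoeff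
  refine (mul_eq_zero.mp ?_).resolve_left (mem_support_iff.mp hγ)
  calc coeff γ f * ∑ p ∈ S with shift p = shift q, c p * multiDescFactorial γ p.1
      = ∑ p ∈ S with shift p = shift q, c p * coeff γ f * multiDescFactorial γ p.1 := by
        rw [Finset.mul_sum]
        exact Finset.sum_congr rfl fun p _ => by ring
    _ = 0 := hcoeff.symm

lemma finrank_le_card_of_exists_coeff_ne_zero {σ R : Type*} [Field R]
    (V : Submodule R (MvPolynomial σ R)) (E : Finset (σ →₀ ℕ))
    (h : ∀ f ∈ V, f ≠ 0 → ∃ γ ∈ E, coeff γ f ≠ 0) : Module.finrank R V ≤ E.card := by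
  let restrict : V →ₗ[R] (E → R) :=
    (LinearMap.pi fun γ : E => lcoeff R (γ : σ →₀ ℕ)) ∘ₗ V.subtype
  have hinj : Function.Injective restrict := by
    rw [← LinearMap.ker_eq_bot, LinearMap.ker_eq_bot']
    intro f hf
    by_contra hf0
    obtain ⟨γ, hγ, hγf⟩ := h f f.2 (by simpa using hf0)
    exact hγf (congr_fun hf ⟨γ, hγ⟩)
  simpa using LinearMap.finrank_le_finrank_of_injective hinj

open Finset in
lemma card_zeros_piFinset_le {R : Type*} [CommRing R] [IsDomain R] [DecidableEq R] {n : ℕ}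
    {P : MvPolynomial (Fin n) R} (hP : P ≠ 0) {G : Finset R} (hG : G.Nonempty) :
    #{x ∈ Fintype.piFinset fun _ => G | eval x P = 0} ≤ P.totalDegree * #G ^ (n - 1) := by
  have hG₀ : 0 < #G := hG.card_pos
  have h := schwartz_zippel_totalDegree hP G
  rw [div_le_div_iff₀ (by positivity) (by exact_mod_cast hG₀)] at h
  have h' : #{x ∈ Fintype.piFinset fun _ => G | eval x P = 0} * #G ≤ P.totalDegree * #G ^ n := by
    exact_mod_cast h
  refine Nat.le_of_mul_le_mul_right (h'.trans ?_) hG₀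
  rw [mul_assoc, ← pow_succ]
  exact Nat.mul_le_mul_left _ (Nat.pow_le_pow_right hG₀ (by omega))

open Finset in
lemma finrank_ker_inf_restrictTotalDegree_le {w : Lex (Fin k → ℤ)}
    (hw : ∀ p ∈ S, c p ≠ 0 → shift p ≤ w) (m : ℕ) :
    Module.finrank ℂ (LinearMap.ker (diffOp k S c) ⊓ restrictTotalDegree (Fin k) ℂ m :
        Submodule ℂ (MvPolynomial (Fin k) ℂ))
      ≤ #{x ∈ Fintype.piFinset fun _ => (range (m + 1)).image (Nat.cast : ℕ → ℂ) |
          eval x (indicialPoly S c w) = 0} := by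
  classical
  have hcast : Function.Injective fun (γ : Fin k →₀ ℕ) (i : Fin k) => (γ i : ℂ) :=
    fun γ δ h => Finsupp.ext fun i => by simpa using congr_fun h i
  refine (finrank_le_card_of_exists_coeff_ne_zero _ (preimage _ _ hcast.injOn)
    fun f hf hf0 => ?_).trans ((card_preimage _ _ _).trans_le (card_filter_le _ _))
  obtain ⟨hker, hdeg⟩ := Submodule.mem_inf.mp hf
  obtain ⟨γ, hγ, hγmax⟩ := f.support.exists_max_image lexExp
    (nonempty_iff_ne_empty.mpr (mt support_eq_empty.mp hf0))
  refine ⟨γ, ?_, mem_support_iff.mp hγ⟩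
  rw [mem_preimage, mem_filter, Fintype.mem_piFinset]
  refine ⟨fun i => mem_image_of_mem _ (mem_range.mpr (Nat.lt_succ_of_le ?_)),
    eval_indicialPoly_eq_zero_of_mem_ker hw hker hγ hγmax⟩
  exact (monomial_le_degreeOf i hγ).trans
    ((degreeOf_le_totalDegree f i).trans ((mem_restrictTotalDegree _ _ _).mp hdeg))

lemma isBigO_natCast_add_one_pow (n : ℕ) :
    (fun m : ℕ => ((m : ℝ) + 1) ^ n) =O[atTop] fun m : ℕ => (m : ℝ) ^ n :=
  ((IsEquivalent.refl.add_const_of_norm_tendsto_atTop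
    (tendsto_norm_atTop_atTop.comp tendsto_natCast_atTop_atTop)).isBigO).pow n

theorem stmt_9_general (k : ℕ)
    (S : Finset ((Fin k →₀ ℕ) × (Fin k →₀ ℕ))) (c : ((Fin k →₀ ℕ) × (Fin k →₀ ℕ)) → ℂ)
    (hD : diffOp k S c ≠ 0) :
    (fun m : ℕ =>
        (Module.finrank ℂ
          (LinearMap.ker (diffOp k S c) ⊓ MvPolynomial.restrictTotalDegree (Fin k) ℂ m :
            Submodule ℂ (MvPolynomial (Fin k) ℂ)) : ℝ))
      =O[atTop] fun m : ℕ => (m : ℝ) ^ (k - 1) := by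
  obtain ⟨p₀, hp₀S, hp₀c⟩ : ∃ p ∈ S, c p ≠ 0 := by
    by_contra! h
    exact hD (Finset.sum_eq_zero fun p hp => by rw [h p hp, zero_smul])
  obtain ⟨q, hq, hqmax⟩ :=
    (S.filter (c · ≠ 0)).exists_max_image shift ⟨p₀, Finset.mem_filter.mpr ⟨hp₀S, hp₀c⟩⟩
  obtain ⟨hqS, hqc⟩ := Finset.mem_filter.mp hq
  have hQ : indicialPoly S c (shift q) ≠ 0 := indicialPoly_ne_zero ⟨q, hqS, rfl, hqc⟩
  have hbound (m : ℕ) : (Module.finrank ℂ (LinearMap.ker (diffOp k S c) ⊓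
        restrictTotalDegree (Fin k) ℂ m : Submodule ℂ (MvPolynomial (Fin k) ℂ)) : ℝ)
      ≤ (indicialPoly S c (shift q)).totalDegree * ((m : ℝ) + 1) ^ (k - 1) := by
    have h := (finrank_ker_inf_restrictTotalDegree_le
      (fun p hp hc => hqmax p (Finset.mem_filter.mpr ⟨hp, hc⟩)) m).trans
      (card_zeros_piFinset_le hQ ((Finset.nonempty_range_iff.mpr m.succ_ne_zero).image _))
    rw [Finset.card_image_of_injective _ Nat.cast_injective, Finset.card_range] at h
    exact_mod_cast h
  refine (IsBigO.of_bound' (Eventually.of_forall fun m => ?_)).trans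
    ((isBigO_natCast_add_one_pow (k - 1)).const_mul_left
      ((indicialPoly S c (shift q)).totalDegree : ℝ))
  rw [Real.norm_of_nonneg (by positivity), Real.norm_of_nonneg (by positivity)]
  exact hbound m

/-- if `D` is a nonzero linear differential operator with polynomial
coefficients on `ℂ[x₁,...,x_k]`, then `dim (Ker D ∩ P_m) = O(m^(k-1))` as `m → ∞`,
where `P_m` is the space of polynomials of total degree at most `m`. -/
theorem stmt_9 (k : ℕ) (hk : 0 < k)
    (S : Finset ((Fin k →₀ ℕ) × (Fin k →₀ ℕ))) (c : ((Fin k →₀ ℕ) × (Fin k →₀ ℕ)) → ℂ)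
    (hD : diffOp k S c ≠ 0) :
    (fun m : ℕ =>
        (Module.finrank ℂ
          (LinearMap.ker (diffOp k S c) ⊓ MvPolynomial.restrictTotalDegree (Fin k) ℂ m :
            Submodule ℂ (MvPolynomial (Fin k) ℂ)) : ℝ))
      =O[atTop] fun m : ℕ => (m : ℝ) ^ (k - 1) :=
  stmt_9_general k S c hD
end

section
/- If a set Λ ⊆ Λ_k of even partitions with at most k parts satisfies: the span of the generalized Jacobi polynomials {P_λ : λ ∈ Λ^c} intersected with polynomials of degree m has dimension at least ε·|Λ_k(2m_j)| along some sequence m_j → ∞ with ε > 0, then Λ^c-indexed polynomial solutions of any fixed nonzero polynomial-coefficient PDE in k variables contradict the bound dim(Ker D ∩ P_m) = O(m^{k-1}). Consequently, any set of linearly independent polynomials {Q_λ}_{λ∈Λ'} with deg Q_λ = |λ|/2 all lying in the kernel of a nonzero polynomial-coefficient differential operator on ℂ[σ_1,...,σ_k] forces Λ' to be sparse, i.e., |Λ' ∩ Λ_k(2m)| / |Λ_k(2m)| → 0. -/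
open Filter Asymptotics MvPolynomial

/-!
The `Q_λ` with `|λ| ≤ 2m` are linearly independent elements of `Ker D ∩ P_m`, so there are
`O(m^(k-1))` of them. On the other hand, with `M = ⌊m/k²⌋`, the even staircases
`λᵢ = 2((k - 1 - i) M + bᵢ)` with `0 ≤ bᵢ ≤ M` are distinct partitions with `|λ| ≤ 2m`
(the steps of size `M` keep them antitone), so `|Λ_k(2m)| ≥ (M + 1)^k ≥ (m/k²)^k`.
-/

theorem LinearIndependent.natCard_le_finrank_of_forall_mem {R M ι : Type*} [Ring R]
    [StrongRankCondition R] [AddCommGroup M] [Module R M] {W : Submodule R M} [Module.Finite R W]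
    {v : ι → M} (hv : LinearIndependent R v) (hW : ∀ i, v i ∈ W) :
    Nat.card ι ≤ Module.finrank R W := by
  have hv' : LinearIndependent R fun i => (⟨v i, hW i⟩ : W) :=
    LinearIndependent.of_comp W.subtype hv
  have := hv'.finite
  have := Fintype.ofFinite ι
  exact Nat.card_eq_fintype_card (α := ι) ▸ hv'.fintype_card_le_finrank

theorem finite_evenPartitions_sum_le (k n : ℕ) :
    Finite {l : Fin k → ℕ // Antitone l ∧ (∀ i, Even (l i)) ∧ ∑ i, l i ≤ n} :=
  Set.Finite.to_subtype <| (Set.finite_Iic fun _ => n).subset fun l hl i =>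
    (Finset.single_le_sum (fun j _ => Nat.zero_le (l j)) (Finset.mem_univ i)).trans hl.2.2

section EvenStaircase

variable {k : ℕ}

def evenStaircase (M : ℕ) (b : Fin k → Fin (M + 1)) (i : Fin k) : ℕ :=
  2 * ((k - 1 - i) * M + b i)

theorem evenStaircase_injective (M : ℕ) : Function.Injective (evenStaircase (k := k) M) := by
  intro b c h
  funext i
  have := congrFun h i
  simp only [evenStaircase] at this
  exact Fin.ext (by omega)

theorem evenStaircase_antitone (M : ℕ) (b : Fin k → Fin (M + 1)) :
    Antitone (evenStaircase M b) := by
  intro i j hij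
  rcases hij.lt_or_eq with hlt | rfl
  · have hstep : (k - 1 - j) * M + M ≤ (k - 1 - i) * M := by
      rw [← Nat.succ_mul]; exact Nat.mul_le_mul_right M (by omega)
    have := (b j).is_lt
    simp only [evenStaircase]
    omega
  · exact le_rfl

theorem even_evenStaircase (M : ℕ) (b : Fin k → Fin (M + 1)) (i : Fin k) :
    Even (evenStaircase M b i) :=
  even_two_mul _

theorem sum_evenStaircase_le (M : ℕ) (b : Fin k → Fin (M + 1)) :
    ∑ i, evenStaircase M b i ≤ 2 * (k * k * M) :=
  calc ∑ i, evenStaircase M b i ≤ ∑ _i : Fin k, 2 * (k * M) :=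
        Finset.sum_le_sum fun i _ => by
          have hstep : (k - 1 - i) * M + M ≤ k * M := by
            rw [← Nat.succ_mul]; exact Nat.mul_le_mul_right M (by omega)
          have := (b i).is_lt
          simp only [evenStaircase]
          omega
    _ = 2 * (k * k * M) := by
        simp only [Finset.sum_const, Finset.card_univ, Fintype.card_fin, smul_eq_mul]
        ring

end EvenStaircase

theorem pow_le_card_evenPartitions {k : ℕ} (hk : 0 < k) (m : ℕ) :
    m ^ k ≤ (k * k) ^ k *
      Nat.card {l : Fin k → ℕ // Antitone l ∧ (∀ i, Even (l i)) ∧ ∑ i, l i ≤ 2 * m} := by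
  have := finite_evenPartitions_sum_le k (2 * m)
  set M := m / (k * k)
  have hcard : (M + 1) ^ k ≤
      Nat.card {l : Fin k → ℕ // Antitone l ∧ (∀ i, Even (l i)) ∧ ∑ i, l i ≤ 2 * m} := by
    have hinj := Nat.card_le_card_of_injective
      (fun b => ⟨evenStaircase M b, evenStaircase_antitone M b, even_evenStaircase M b,
        (sum_evenStaircase_le M b).trans (Nat.mul_le_mul_left 2 (Nat.mul_div_le m (k * k)))⟩ :
        (Fin k → Fin (M + 1)) → {l : Fin k → ℕ // Antitone l ∧ (∀ i, Even (l i)) ∧ ∑ i, l i ≤ 2 * m})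
      fun b c h => evenStaircase_injective M (congrArg Subtype.val h)
    simpa using hinj
  calc m ^ k ≤ (k * k * (M + 1)) ^ k :=
        Nat.pow_le_pow_left (Nat.lt_mul_div_succ m (Nat.mul_pos hk hk)).le k
    _ ≤ _ := by rw [mul_pow]; exact Nat.mul_le_mul_left _ hcard

theorem isBigO_pow_card_evenPartitions {k : ℕ} (hk : 0 < k) :
    (fun m : ℕ => (m : ℝ) ^ k) =O[atTop] fun m : ℕ =>
      (Nat.card {l : Fin k → ℕ // Antitone l ∧ (∀ i, Even (l i)) ∧ ∑ i, l i ≤ 2 * m} : ℝ) :=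
  isBigO_of_le' (c := ((k * k) ^ k : ℕ)) _ fun m => by
    simp only [Real.norm_natCast, norm_pow]
    exact_mod_cast pow_le_card_evenPartitions hk m

theorem card_le_finrank_ker_inf_restrictTotalDegree {k : ℕ}
    {D : Module.End ℂ (MvPolynomial (Fin k) ℂ)}
    {Λ' : Set {l : Fin k → ℕ // Antitone l ∧ ∀ i, Even (l i)}}
    {Q : Λ' → MvPolynomial (Fin k) ℂ} (hQind : LinearIndependent ℂ Q)
    (hQdeg : ∀ l : Λ', 2 * (Q l).totalDegree = ∑ i, l.1.1 i)
    (hQker : ∀ l : Λ', Q l ∈ LinearMap.ker D) (m : ℕ) :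
    Nat.card {l : {l : Fin k → ℕ // Antitone l ∧ ∀ i, Even (l i)} //
        l ∈ Λ' ∧ ∑ i, l.1 i ≤ 2 * m} ≤
      Module.finrank ℂ (LinearMap.ker D ⊓ restrictTotalDegree (Fin k) ℂ m :
        Submodule ℂ (MvPolynomial (Fin k) ℂ)) := by
  rw [← Nat.card_congr (Equiv.subtypeSubtypeEquivSubtypeInter (· ∈ Λ') _)]
  refine (hQind.comp _ Subtype.val_injective).natCard_le_finrank_of_forall_mem fun l =>
    ⟨hQker l.1, (mem_restrictTotalDegree _ _ _).2 ?_⟩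
  have := hQdeg l.1
  have := l.2
  simp only [Function.comp_apply] at *
  omega

theorem stmt_14_general (k : ℕ) (hk : 0 < k)
    (D : Module.End ℂ (MvPolynomial (Fin k) ℂ))
    (hker : (fun m : ℕ =>
        (Module.finrank ℂ
          (LinearMap.ker D ⊓ MvPolynomial.restrictTotalDegree (Fin k) ℂ m :
            Submodule ℂ (MvPolynomial (Fin k) ℂ)) : ℝ))
      =O[atTop] fun m : ℕ => (m : ℝ) ^ (k - 1))
    (Λ' : Set {l : Fin k → ℕ // Antitone l ∧ ∀ i, Even (l i)})
    (Q : Λ' → MvPolynomial (Fin k) ℂ)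
    (hQind : LinearIndependent ℂ Q)
    (hQdeg : ∀ l : Λ', 2 * (Q l).totalDegree = ∑ i, l.1.1 i)
    (hQker : ∀ l : Λ', Q l ∈ LinearMap.ker D) :
    Tendsto (fun m : ℕ =>
        (Nat.card {l : {l : Fin k → ℕ // Antitone l ∧ ∀ i, Even (l i)} //
            l ∈ Λ' ∧ ∑ i, l.1 i ≤ 2 * m} : ℝ) /
        (Nat.card {l : Fin k → ℕ // Antitone l ∧ (∀ i, Even (l i)) ∧ ∑ i, l i ≤ 2 * m} : ℝ))
      atTop (nhds 0) := by
  have hpow : (fun m : ℕ => (m : ℝ) ^ (k - 1)) =o[atTop] fun m : ℕ => (m : ℝ) ^ k :=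
    (isLittleO_pow_pow_atTop_of_lt (Nat.sub_lt hk one_pos)).comp_tendsto
      tendsto_natCast_atTop_atTop
  refine IsLittleO.tendsto_div_nhds_zero <| ((isBigO_of_le atTop fun m => ?_).trans hker)
    |>.trans_isLittleO (hpow.trans_isBigO (isBigO_pow_card_evenPartitions hk))
  simp only [Real.norm_natCast]
  exact_mod_cast card_le_finrank_ker_inf_restrictTotalDegree hQind hQdeg hQker m

/-- let `D` be a nonzero linear differential operator with polynomial
coefficients on `ℂ[σ₁,...,σ_k]`, known to satisfy `dim(Ker D ∩ P_m) = O(m^(k-1))`.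
If `{Q_λ}_{λ ∈ Λ'}` is a family of linearly independent polynomials indexed by a set `Λ'`
of even partitions with at most `k` parts, with `deg Q_λ = |λ|/2`, all lying in `Ker D`,
then `Λ'` is sparse: `|Λ' ∩ Λ_k(2m)| / |Λ_k(2m)| → 0` as `m → ∞`. -/
theorem stmt_14 (k : ℕ) (hk : 0 < k)
    (D : Module.End ℂ (MvPolynomial (Fin k) ℂ)) (hD : D ≠ 0)
    (hker : (fun m : ℕ =>
        (Module.finrank ℂ
          (LinearMap.ker D ⊓ MvPolynomial.restrictTotalDegree (Fin k) ℂ m :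
            Submodule ℂ (MvPolynomial (Fin k) ℂ)) : ℝ))
      =O[atTop] fun m : ℕ => (m : ℝ) ^ (k - 1))
    (Λ' : Set {l : Fin k → ℕ // Antitone l ∧ ∀ i, Even (l i)})
    (Q : Λ' → MvPolynomial (Fin k) ℂ)
    (hQind : LinearIndependent ℂ Q)
    (hQdeg : ∀ l : Λ', 2 * (Q l).totalDegree = ∑ i, l.1.1 i)
    (hQker : ∀ l : Λ', Q l ∈ LinearMap.ker D) :
    Tendsto (fun m : ℕ =>
        (Nat.card {l : {l : Fin k → ℕ // Antitone l ∧ ∀ i, Even (l i)} //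
            l ∈ Λ' ∧ ∑ i, l.1 i ≤ 2 * m} : ℝ) /
        (Nat.card {l : Fin k → ℕ // Antitone l ∧ (∀ i, Even (l i)) ∧ ∑ i, l i ≤ 2 * m} : ℝ))
      atTop (nhds 0) :=
  stmt_14_general k hk D hker Λ' Q hQind hQdeg hQker
end

section
/- If the minimum of p and n−p is strictly less than the minimum of k and n−k, then the ratio |Λ_{min(p,n−p)}(2m)| / |Λ_{min(k,n−k)}(2m)| tends to 0 as m → ∞, where Λ_j(2m) counts partitions into at most j even parts summing to at most 2m. -/
/-!
The number of partitions into at most `j` even parts with sum at most `2m` grows like `m ^ j`: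
every part is at most `2m`, which gives `(2m + 1) ^ j` as an upper bound, and for `j ^ 2 t ≤ m`
the staircase `2 (d i + (j - 1 - i) t)` with `d i ≤ t` gives `(t + 1) ^ j` distinct such
partitions. Since `m ^ a = o(m ^ b)` for `a < b`, the ratio tends to `0`.
-/

open Filter Asymptotics

def evenPartitions (j N : ℕ) : Set (Fin j → ℕ) :=
  {l | Antitone l ∧ (∀ i, Even (l i)) ∧ ∑ i, l i ≤ N}

namespace evenPartitions

lemma le_of_mem {j N : ℕ} {l : Fin j → ℕ} (hl : l ∈ evenPartitions j N) (i : Fin j) :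
    l i ≤ N :=
  (Finset.single_le_sum (fun i _ => Nat.zero_le (l i)) (Finset.mem_univ i)).trans hl.2.2

def toFinFun (j N : ℕ) : evenPartitions j N ↪ (Fin j → Fin (N + 1)) where
  toFun l i := ⟨l.1 i, Nat.lt_succ_of_le (le_of_mem l.2 i)⟩
  inj' _ _ h := Subtype.ext <| funext fun i => congrArg Fin.val (congrFun h i)

instance (j N : ℕ) : Finite (evenPartitions j N) :=
  Finite.of_injective _ (toFinFun j N).injective

lemma card_le (j N : ℕ) : Nat.card (evenPartitions j N) ≤ (N + 1) ^ j := by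
  simpa using Nat.card_le_card_of_injective _ (toFinFun j N).injective

def staircase {j t : ℕ} (d : Fin j → Fin (t + 1)) (i : Fin j) : ℕ :=
  2 * (d i + i.rev * t)

lemma staircase_mem {j m t : ℕ} (h : j ^ 2 * t ≤ m) (d : Fin j → Fin (t + 1)) :
    staircase d ∈ evenPartitions j (2 * m) := by
  have hd (i : Fin j) : (d i : ℕ) ≤ t := Fin.is_le _
  refine ⟨fun i i' hii' => ?_, fun i => even_two_mul _, ?_⟩
  · rcases hii'.eq_or_lt with rfl | hlt
    · exact le_rfl
    · have hrev : (i'.rev : ℕ) + 1 ≤ i.rev := Fin.rev_lt_rev.mpr hlt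
      have := Nat.mul_le_mul_right t hrev
      simp only [staircase]
      nlinarith [hd i']
  · have hterm (i : Fin j) : staircase d i ≤ 2 * (j * t) := by
      have hrev : (i.rev : ℕ) + 1 ≤ j := i.rev.isLt
      have := Nat.mul_le_mul_right t hrev
      simp only [staircase]
      nlinarith [hd i]
    calc ∑ i, staircase d i ≤ ∑ _i : Fin j, 2 * (j * t) :=
          Finset.sum_le_sum fun i _ => hterm i
      _ = 2 * (j ^ 2 * t) := by
        simp only [Finset.sum_const, Finset.card_univ, Fintype.card_fin, smul_eq_mul]; ring
      _ ≤ 2 * m := by omega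

lemma staircase_injective {j t : ℕ} :
    Function.Injective (staircase : (Fin j → Fin (t + 1)) → Fin j → ℕ) := by
  intro d d' h
  funext i
  have := congrFun h i
  simp only [staircase] at this
  exact Fin.ext (by omega)

lemma pow_le_card {j m t : ℕ} (h : j ^ 2 * t ≤ m) :
    (t + 1) ^ j ≤ Nat.card (evenPartitions j (2 * m)) := by
  have hinj : Function.Injective fun d : Fin j → Fin (t + 1) =>
      (⟨staircase d, staircase_mem h d⟩ : evenPartitions j (2 * m)) :=
    fun d d' hdd' => staircase_injective (congrArg Subtype.val hdd')
  simpa using Nat.card_le_card_of_injective _ hinj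

lemma pow_le_mul_card (j m : ℕ) :
    m ^ j ≤ (j ^ 2) ^ j * Nat.card (evenPartitions j (2 * m)) := by
  rcases Nat.eq_zero_or_pos j with rfl | hj
  · simpa using pow_le_card (j := 0) (t := 0) (Nat.zero_le m)
  · have hm : m ≤ j ^ 2 * (m / j ^ 2 + 1) := (Nat.lt_mul_div_succ m (by positivity)).le
    calc m ^ j ≤ (j ^ 2 * (m / j ^ 2 + 1)) ^ j := Nat.pow_le_pow_left hm j
      _ = (j ^ 2) ^ j * (m / j ^ 2 + 1) ^ j := mul_pow _ _ _
      _ ≤ (j ^ 2) ^ j * Nat.card (evenPartitions j (2 * m)) :=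
        Nat.mul_le_mul_left _ (pow_le_card (Nat.mul_div_le m (j ^ 2)))

lemma card_le_mul_pow (j : ℕ) {m : ℕ} (hm : 1 ≤ m) :
    Nat.card (evenPartitions j (2 * m)) ≤ 3 ^ j * m ^ j := by
  calc Nat.card (evenPartitions j (2 * m)) ≤ (2 * m + 1) ^ j := card_le j (2 * m)
    _ ≤ (3 * m) ^ j := Nat.pow_le_pow_left (by omega) j
    _ = 3 ^ j * m ^ j := mul_pow _ _ _

theorem isTheta_card (j : ℕ) :
    (fun m : ℕ => (Nat.card (evenPartitions j (2 * m)) : ℝ)) =Θ[atTop]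
      fun m => (m : ℝ) ^ j := by
  refine ⟨IsBigO.of_bound (3 ^ j) ?_, IsBigO.of_bound ((j ^ 2) ^ j) ?_⟩
  · filter_upwards [eventually_ge_atTop 1] with m hm
    simp only [Real.norm_natCast, norm_pow]
    exact_mod_cast card_le_mul_pow j hm
  · refine Eventually.of_forall fun m => ?_
    simp only [Real.norm_natCast, norm_pow]
    exact_mod_cast pow_le_mul_card j m

end evenPartitions

theorem stmt_15_general (n p k : ℕ) (h : min p (n - p) < min k (n - k)) :
    Tendsto (fun m : ℕ =>
        (Nat.card {l : Fin (min p (n - p)) → ℕ //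
            Antitone l ∧ (∀ i, Even (l i)) ∧ ∑ i, l i ≤ 2 * m} : ℝ) /
        (Nat.card {l : Fin (min k (n - k)) → ℕ //
            Antitone l ∧ (∀ i, Even (l i)) ∧ ∑ i, l i ≤ 2 * m} : ℝ))
      atTop (nhds 0) := by
  have hpow :
      (fun m : ℕ => (m : ℝ) ^ min p (n - p)) =o[atTop] fun m => (m : ℝ) ^ min k (n - k) :=
    (isLittleO_pow_pow_atTop_of_lt h).comp_tendsto tendsto_natCast_atTop_atTop
  exact ((evenPartitions.isTheta_card _).isBigO.trans_isLittleO hpow).trans_isBigO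
    (evenPartitions.isTheta_card _).symm.isBigO |>.tendsto_div_nhds_zero

/-- if `min(p, n−p) < min(k, n−k)` (with `1 ≤ p, k ≤ n−1`), then the ratio
`|Λ_{min(p,n−p)}(2m)| / |Λ_{min(k,n−k)}(2m)|` of counts of partitions into at most that
many even parts summing to at most `2m` tends to `0` as `m → ∞`. -/
theorem stmt_15 (n p k : ℕ) (hp : 1 ≤ p) (hp' : p ≤ n - 1) (hk : 1 ≤ k) (hk' : k ≤ n - 1)
    (h : min p (n - p) < min k (n - k)) :
    Tendsto (fun m : ℕ =>
        (Nat.card {l : Fin (min p (n - p)) → ℕ //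
            Antitone l ∧ (∀ i, Even (l i)) ∧ ∑ i, l i ≤ 2 * m} : ℝ) /
        (Nat.card {l : Fin (min k (n - k)) → ℕ //
            Antitone l ∧ (∀ i, Even (l i)) ∧ ∑ i, l i ≤ 2 * m} : ℝ))
      atTop (nhds 0) :=
  stmt_15_general n p k h
end
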